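/- For any automorphisms α and β of a finitely generated group G and any n ≥ 1, Flux_{αβ}(n) ≥ Flux_β(n) − Flux_α(n) and Flux_{αβ}(n) ≥ Flux_α(n) − Flux_β(n), where αβ applies α first and then β. -/

import Mathlib

/-- Word length of `g` with respect to the finite generating set `X` (letters from `X ∪ X⁻¹`). -/
noncomputable def wordLength {G : Type*} [Group G] (X : Finset G) (g : G) : ℕ :=
  sInf {n | ∃ l : List G, (∀ a ∈ l, a ∈ X ∨ a⁻¹ ∈ X) ∧ l.prod = g ∧ l.length = n}

/-- The ball of radius `n` in `G` with respect to the word length. -/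
noncomputable def ball {G : Type*} [Group G] (X : Finset G) (n : ℕ) : Set G :=
  {g | wordLength X g ≤ n}

/-- `curlFun X φ n = #{w : |w| ≤ n, |φ(w)| ≤ n}`. -/
noncomputable def curlFun {G : Type*} [Group G] (X : Finset G) (φ : G → G) (n : ℕ) : ℕ :=
  {w : G | wordLength X w ≤ n ∧ wordLength X (φ w) ≤ n}.ncard

/-- `fluxFun X φ n = #{w : |w| ≤ n, |φ(w)| > n}`. -/
noncomputable def fluxFun {G : Type*} [Group G] (X : Finset G) (φ : G → G) (n : ℕ) : ℕ :=
  {w : G | wordLength X w ≤ n ∧ n < wordLength X (φ w)}.ncard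


/-! Let `B` be the ball of radius `n`, so that `Flux_φ(n) = #(B \ φ⁻¹ B)`. A word escaping `B`
under `β ∘ α` either escapes already under `α`, or is sent by `α` into `B` and then escapes under
`β`; hence flux is subadditive under composition with an injective first factor. For a bijection
`e`, the sets `B` and `e⁻¹ B` have the same size, so `#(B \ e⁻¹ B) = #(e⁻¹ B \ B) = #(B \ e B)`:
a bijection and its inverse have the same flux. Writing `β = (β ∘ α) ∘ α⁻¹` and
`α = β⁻¹ ∘ (β ∘ α)` then gives both inequalities. -/

namespace Set

variable {α : Type*} {B : Set α}

theorem ncard_sdiff_preimage_comp_le (hB : B.Finite) {f g : α → α} (hf : f.Injective) :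
    (B \ (g ∘ f) ⁻¹' B).ncard ≤ (B \ f ⁻¹' B).ncard + (B \ g ⁻¹' B).ncard := by
  have hsub : B \ (g ∘ f) ⁻¹' B ⊆ (B \ f ⁻¹' B) ∪ f ⁻¹' (B \ g ⁻¹' B) := by
    rintro w ⟨hw, hgfw⟩
    by_cases hfw : f w ∈ B
    · exact Or.inr ⟨hfw, hgfw⟩
    · exact Or.inl ⟨hw, hfw⟩
  have hgB : (B \ g ⁻¹' B).Finite := hB.subset sdiff_subset
  have hpre : (f ⁻¹' (B \ g ⁻¹' B)).ncard ≤ (B \ g ⁻¹' B).ncard :=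
    ncard_le_ncard_of_injOn f (fun _ h ↦ h) hf.injOn hgB
  calc (B \ (g ∘ f) ⁻¹' B).ncard
      ≤ ((B \ f ⁻¹' B) ∪ f ⁻¹' (B \ g ⁻¹' B)).ncard :=
        ncard_le_ncard hsub ((hB.subset sdiff_subset).union (hgB.preimage hf.injOn))
    _ ≤ (B \ f ⁻¹' B).ncard + (f ⁻¹' (B \ g ⁻¹' B)).ncard := ncard_union_le _ _
    _ ≤ (B \ f ⁻¹' B).ncard + (B \ g ⁻¹' B).ncard := Nat.add_le_add_left hpre _

theorem ncard_sdiff_comm_of_ncard_eq {s t : Set α} (hs : s.Finite) (ht : t.Finite)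
    (hst : s.ncard = t.ncard) : (s \ t).ncard = (t \ s).ncard := by
  have hs' := ncard_inter_add_ncard_sdiff_eq_ncard s t hs
  have ht' := ncard_inter_add_ncard_sdiff_eq_ncard t s ht
  rw [inter_comm] at ht'
  omega

theorem ncard_sdiff_preimage_equiv_symm (hB : B.Finite) (e : α ≃ α) :
    (B \ e ⁻¹' B).ncard = (B \ e.symm ⁻¹' B).ncard := by
  have hpre (S : Set α) : (e ⁻¹' S).ncard = S.ncard :=
    ncard_preimage_of_injective_subset_range e.injective (by simp)
  have hswap : e ⁻¹' B \ B = e ⁻¹' (B \ e.symm ⁻¹' B) := by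
    rw [preimage_sdiff, ← preimage_comp, e.symm_comp_self, preimage_id]
  rw [ncard_sdiff_comm_of_ncard_eq hB (hB.preimage e.injective.injOn) (hpre B).symm, hswap,
    hpre]

end Set

section WordLength

variable {G : Type*} [Group G] (X : Finset G)

theorem ball_finite (hX : Subgroup.closure (X : Set G) = ⊤) (n : ℕ) : (ball X n).Finite := by
  set Y : Set G := {g | g ∈ X ∨ g⁻¹ ∈ X}
  have hY : Y.Finite := (X.finite_toSet.union X.finite_toSet.inv).subset fun _ h ↦ h
  have : Finite Y := hY
  have hwords : {l : List G | (∀ a ∈ l, a ∈ Y) ∧ l.length ≤ n}.Finite := by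
    refine ((List.finite_length_le Y n).image (List.map Subtype.val)).subset ?_
    rintro l ⟨hmem, hlen⟩
    exact ⟨l.pmap Subtype.mk hmem, by simpa using hlen, by simp [List.map_pmap]⟩
  refine (hwords.image List.prod).subset fun g hg ↦ ?_
  have hgen :
      {m | ∃ l : List G, (∀ a ∈ l, a ∈ X ∨ a⁻¹ ∈ X) ∧ l.prod = g ∧ l.length = m}.Nonempty := by
    have hg' : g ∈ (Subgroup.closure (X : Set G)).toSubmonoid := hX ▸ Subgroup.mem_top g
    rw [Subgroup.closure_toSubmonoid] at hg'
    obtain ⟨l, hl, hprod⟩ := Submonoid.exists_list_of_mem_closure hg'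
    exact ⟨l.length, l, fun a ha ↦ (hl a ha).imp id Set.mem_inv.mp, hprod, rfl⟩
  obtain ⟨l, hl, hprod, hlen⟩ := Nat.sInf_mem hgen
  exact ⟨l, ⟨hl, hlen ▸ hg⟩, hprod⟩

theorem fluxFun_eq_ncard_sdiff (φ : G → G) (n : ℕ) :
    fluxFun X φ n = (ball X n \ φ ⁻¹' ball X n).ncard := by
  simp only [fluxFun, ball, Set.sdiff_eq, Set.preimage_ofPred_eq, Set.compl_ofPred, not_le]
  rfl

variable {X}

theorem fluxFun_comp_le (hX : Subgroup.closure (X : Set G) = ⊤) {φ : G → G} (hφ : φ.Injective)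
    (ψ : G → G) (n : ℕ) :
    fluxFun X (fun w ↦ ψ (φ w)) n ≤ fluxFun X φ n + fluxFun X ψ n := by
  simp only [fluxFun_eq_ncard_sdiff]
  exact Set.ncard_sdiff_preimage_comp_le (ball_finite X hX n) hφ

theorem fluxFun_symm (hX : Subgroup.closure (X : Set G) = ⊤) (α : G ≃* G) (n : ℕ) :
    fluxFun X α.symm n = fluxFun X α n := by
  simp only [fluxFun_eq_ncard_sdiff]
  exact (Set.ncard_sdiff_preimage_equiv_symm (ball_finite X hX n) α.toEquiv).symm

end WordLength

theorem stmt_6_general {G : Type*} [Group G] (X : Finset G)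
    (hX : Subgroup.closure (X : Set G) = ⊤) (α β : G ≃* G) (n : ℕ) :
    (fluxFun X (fun w => β (α w)) n : ℤ) ≥ (fluxFun X β n : ℤ) - (fluxFun X α n : ℤ) ∧
    (fluxFun X (fun w => β (α w)) n : ℤ) ≥ (fluxFun X α n : ℤ) - (fluxFun X β n : ℤ) := by
  have hβ : fluxFun X β n ≤ fluxFun X α n + fluxFun X (fun w => β (α w)) n := by
    simpa only [MulEquiv.apply_symm_apply, fluxFun_symm hX] using
      fluxFun_comp_le hX α.symm.injective (fun w => β (α w)) n
  have hα : fluxFun X α n ≤ fluxFun X (fun w => β (α w)) n + fluxFun X β n := by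
    simpa only [MulEquiv.symm_apply_apply, fluxFun_symm hX] using
      fluxFun_comp_le hX (φ := fun w => β (α w)) (β.injective.comp α.injective) β.symm n
  omega

/-- For any automorphisms `α` and `β` of a finitely generated group `G` and any `n ≥ 1`,
`Flux_{αβ}(n) ≥ Flux_β(n) − Flux_α(n)` and `Flux_{αβ}(n) ≥ Flux_α(n) − Flux_β(n)`,
where the composite applies `α` first, then `β`. -/
theorem stmt_6 {G : Type*} [Group G] (X : Finset G)
    (hX : Subgroup.closure (X : Set G) = ⊤) (α β : G ≃* G) (n : ℕ) (hn : 1 ≤ n) :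
    (fluxFun X (fun w => β (α w)) n : ℤ) ≥ (fluxFun X β n : ℤ) - (fluxFun X α n : ℤ) ∧
    (fluxFun X (fun w => β (α w)) n : ℤ) ≥ (fluxFun X α n : ℤ) - (fluxFun X β n : ℤ) :=
  stmt_6_general X hX α β n
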